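/- arXiv:2403.06413 — 2 statements merged into one kernel-verified Lean document; each statement's English description precedes it below -/
import Mathlib

section
/- Let n ≥ 1, let α > -1 and let a, b, c be real numbers. If a ≥ 0, α ≤ b, and c ≤ a+b-α, then S_{a,b,c} is bounded from L^1_α to L^∞. -/
open MeasureTheory Complex
open scoped ENNReal

noncomputable section

/-- `ℂ^n` with the Euclidean (Hermitian) structure. -/
abbrev Cn (n : ℕ) := EuclideanSpace ℂ (Fin n)

instance (n : ℕ) : MeasurableSpace (Cn n) := MeasurableSpace.comap WithLp.ofLp MeasurableSpace.pi
instance (n : ℕ) : BorelSpace (Cn n) := PiLp.borelSpace 2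

/-- The open unit ball `B_n` of `ℂ^n`. -/
def unitBall (n : ℕ) : Set (Cn n) := Metric.ball 0 1

/-- Lebesgue volume measure on `B_n`, normalized so that `v(B_n) = 1`. -/
def vol (n : ℕ) : Measure (Cn n) :=
  (volume (unitBall n))⁻¹ • volume.restrict (unitBall n)

/-- The weighted measure `dv_γ = c_γ (1-|z|²)^γ dv`, with
`c_γ = Γ(n+γ+1)/(n! Γ(γ+1))`. -/
def wvol (n : ℕ) (γ : ℝ) : Measure (Cn n) :=
  (vol n).withDensity fun z =>
    ENNReal.ofReal
      ((Real.Gamma ((n : ℝ) + γ + 1) / ((n.factorial : ℝ) * Real.Gamma (γ + 1))) *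
        (1 - ‖z‖ ^ 2) ^ γ)

/-- The Hermitian pairing `⟨z,w⟩ = ∑ z_j conj(w_j)`. -/
def herm {n : ℕ} (z w : Cn n) : ℂ := ∑ j, z j * (starRingEnd ℂ) (w j)

/-- Kernel of the Forelli–Rudin type operator `T_{a,b,c}`:
`(1-|z|²)^a (1-|w|²)^b (1-⟨z,w⟩)^{-c}` (principal branch power). -/
def Tker (n : ℕ) (a b c : ℝ) (z w : Cn n) : ℂ :=
  (((1 - ‖z‖ ^ 2) ^ a * (1 - ‖w‖ ^ 2) ^ b : ℝ) : ℂ) * (1 - herm z w) ^ (-(c : ℂ))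

/-- Kernel of the Forelli–Rudin type operator `S_{a,b,c}`:
`(1-|z|²)^a (1-|w|²)^b |1-⟨z,w⟩|^{-c}`. -/
def Sker (n : ℕ) (a b c : ℝ) (z w : Cn n) : ℂ :=
  (((1 - ‖z‖ ^ 2) ^ a * (1 - ‖w‖ ^ 2) ^ b * ‖1 - herm z w‖ ^ (-c) : ℝ) : ℂ)

/-- The integral operator with kernel `K` (integration in `w` with respect to `ρ`)
is bounded from `L^p(μ)` to `L^q(ν)`: there is `C ≥ 0` such that for every
`f ∈ L^p(μ)` the defining integral converges absolutely for a.e. `z` and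
`‖A f‖_{L^q(ν)} ≤ C ‖f‖_{L^p(μ)}`. -/
def IsBddOp (n : ℕ) (K : Cn n → Cn n → ℂ) (ρ : Measure (Cn n))
    (p q : ℝ≥0∞) (μ ν : Measure (Cn n)) : Prop :=
  ∃ C : ℝ, 0 ≤ C ∧ ∀ f : Cn n → ℂ, MemLp f p μ →
    (∀ᵐ z ∂(vol n), Integrable (fun w => K z w * f w) ρ) ∧
    eLpNorm (fun z => ∫ w, K z w * f w ∂ρ) q ν ≤ ENNReal.ofReal C * eLpNorm f p μ


lemma herm_eq_inner {n : ℕ} (z w : Cn n) : herm z w = (inner ℂ w z : ℂ) := by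
  simp [herm, PiLp.inner_apply, RCLike.inner_apply, mul_comm]

lemma herm_abs_le {n : ℕ} (z w : Cn n) : ‖herm z w‖ ≤ ‖z‖ * ‖w‖ := by
  rw [herm_eq_inner]
  calc ‖inner (𝕜 := ℂ) w z‖ = ‖(inner (𝕜 := ℂ) w z : ℂ)‖ := rfl
    _ ≤ ‖w‖ * ‖z‖ := norm_inner_le_norm w z
    _ = ‖z‖ * ‖w‖ := mul_comm _ _

lemma herm_continuous {n : ℕ} (z : Cn n) : Continuous fun w : Cn n => herm z w := by
  have : (fun w : Cn n => herm z w) = fun w : Cn n => (inner ℂ w z : ℂ) :=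
    funext fun w => herm_eq_inner z w
  rw [this]
  exact continuous_id.inner continuous_const

lemma Sker_bound (n : ℕ) (α a b c : ℝ)
    (ha : 0 ≤ a) (hab : α ≤ b) (hc : c ≤ a + b - α)
    (z w : Cn n) (hz : ‖z‖ < 1) (hw : ‖w‖ < 1) :
    ‖Sker n a b c z w‖ ≤ ((2:ℝ) ^ (a + b - α) * 2 ^ (a + b - α - c)) * (1 - ‖w‖ ^ 2) ^ α := by
  have hr0 : (0:ℝ) ≤ ‖z‖ := norm_nonneg z
  have hs0 : (0:ℝ) ≤ ‖w‖ := norm_nonneg w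
  set r := ‖z‖
  set s := ‖w‖
  set t := ‖1 - herm z w‖ with htdef
  have hrs : r * s < 1 := by nlinarith
  have hu : ‖herm z w‖ ≤ r * s := herm_abs_le z w
  have ht1 : 1 - r * s ≤ t := by
    have h := norm_sub_norm_le (1:ℂ) (herm z w)
    rw [norm_one] at h
    have : ‖herm z w‖ = ‖herm z w‖ := rfl
    have : t = ‖(1:ℂ) - herm z w‖ := rfl
    linarith [h, hu]
  have ht2 : t ≤ 2 := by
    have h := norm_sub_le (1:ℂ) (herm z w)
    rw [norm_one] at h
    have ht : t = ‖(1:ℂ) - herm z w‖ := rfl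
    have habs : ‖herm z w‖ = ‖herm z w‖ := rfl
    linarith [h, hu]
  have htpos : 0 < t := by linarith
  have hr2 : 0 < 1 - r ^ 2 := by nlinarith
  have hs2 : 0 < 1 - s ^ 2 := by nlinarith
  have h4 : 1 - r ^ 2 ≤ 2 * t := by nlinarith [sq_nonneg (r - s)]
  have h5 : 1 - s ^ 2 ≤ 2 * t := by nlinarith [sq_nonneg (r - s)]
  have hSnorm : ‖Sker n a b c z w‖ = (1 - r ^ 2) ^ a * (1 - s ^ 2) ^ b * t ^ (-c) := by
    rw [Sker, Complex.norm_real, Real.norm_eq_abs, _root_.abs_of_nonneg]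
    positivity
  rw [hSnorm]
  have c1 : (1 - r ^ 2) ^ a ≤ (2 * t) ^ a := Real.rpow_le_rpow hr2.le h4 ha
  have c2 : (1 - s ^ 2) ^ (b - α) ≤ (2 * t) ^ (b - α) :=
    Real.rpow_le_rpow hs2.le h5 (by linarith)
  have c3 : (1 - s ^ 2) ^ b = (1 - s ^ 2) ^ (b - α) * (1 - s ^ 2) ^ α := by
    rw [← Real.rpow_add hs2, sub_add_cancel]
  have htc0 : (0:ℝ) ≤ t ^ (-c) := Real.rpow_nonneg htpos.le _
  have hsα0 : (0:ℝ) ≤ (1 - s ^ 2) ^ α := Real.rpow_nonneg hs2.le _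
  have h2t : (0:ℝ) ≤ 2 * t := by linarith
  calc (1 - r ^ 2) ^ a * (1 - s ^ 2) ^ b * t ^ (-c)
      = ((1 - r ^ 2) ^ a * (1 - s ^ 2) ^ (b - α) * t ^ (-c)) * (1 - s ^ 2) ^ α := by
        rw [c3]; ring
    _ ≤ ((2 * t) ^ a * (2 * t) ^ (b - α) * t ^ (-c)) * (1 - s ^ 2) ^ α := by
        apply mul_le_mul_of_nonneg_right _ hsα0
        apply mul_le_mul_of_nonneg_right _ htc0
        exact mul_le_mul c1 c2 (Real.rpow_nonneg hs2.le _) (Real.rpow_nonneg h2t _)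
    _ = ((2:ℝ) ^ (a + b - α) * t ^ (a + b - α - c)) * (1 - s ^ 2) ^ α := by
        rw [Real.mul_rpow (by norm_num) htpos.le, Real.mul_rpow (by norm_num) htpos.le]
        rw [show (2:ℝ) ^ a * t ^ a * ((2:ℝ) ^ (b - α) * t ^ (b - α)) * t ^ (-c)
              = ((2:ℝ) ^ a * 2 ^ (b - α)) * (t ^ a * t ^ (b - α) * t ^ (-c)) by ring]
        rw [← Real.rpow_add two_pos, ← Real.rpow_add htpos, ← Real.rpow_add htpos]
        congr 2 <;> ring
    _ ≤ ((2:ℝ) ^ (a + b - α) * 2 ^ (a + b - α - c)) * (1 - s ^ 2) ^ α := by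
        apply mul_le_mul_of_nonneg_right _ hsα0
        apply mul_le_mul_of_nonneg_left _ (Real.rpow_nonneg (by norm_num) _)
        exact Real.rpow_le_rpow htpos.le ht2 (by linarith)

lemma aesm_vol {n : ℕ} {X : Type*} [TopologicalSpace X] [TopologicalSpace.PseudoMetrizableSpace X]
    {f : Cn n → X}
    (h : AEStronglyMeasurable f (volume.restrict (unitBall n))) :
    AEStronglyMeasurable f (vol n) := by
  obtain ⟨g, hg, hfg⟩ := h
  exact ⟨g, hg, Measure.ae_smul_measure hfg _⟩

lemma ball_ae {n : ℕ} : ∀ᵐ w ∂(vol n), ‖w‖ < 1 := by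
  apply Measure.ae_smul_measure
  filter_upwards [ae_restrict_mem (measurableSet_ball : MeasurableSet (unitBall n))] with w hw
  simpa [unitBall, mem_ball_zero_iff] using hw

lemma contOn_rpow {n : ℕ} (e : ℝ) :
    ContinuousOn (fun w : Cn n => (1 - ‖w‖ ^ 2) ^ e) (unitBall n) := by
  intro w hw
  have hw1 : ‖w‖ < 1 := by simpa [unitBall, mem_ball_zero_iff] using hw
  have hpos : 0 < 1 - ‖w‖ ^ 2 := by nlinarith [norm_nonneg w]
  apply ContinuousAt.continuousWithinAt
  have h2 : ContinuousAt (fun w : Cn n => 1 - ‖w‖ ^ 2) w :=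
    (continuous_const.sub (continuous_norm.pow 2)).continuousAt
  exact h2.rpow_const (Or.inl hpos.ne')

lemma contOn_Sker {n : ℕ} (a b c : ℝ) (z : Cn n) (hz : ‖z‖ < 1) :
    ContinuousOn (fun w : Cn n => Sker n a b c z w) (unitBall n) := by
  apply Continuous.comp_continuousOn Complex.continuous_ofReal
  apply ContinuousOn.mul
  · exact (continuousOn_const.mul (contOn_rpow b))
  · intro w hw
    have hw1 : ‖w‖ < 1 := by simpa [unitBall, mem_ball_zero_iff] using hw
    have hrs : ‖z‖ * ‖w‖ < 1 := by nlinarith [norm_nonneg z, norm_nonneg w]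
    have htpos : 0 < ‖1 - herm z w‖ := by
      have h := norm_sub_norm_le (1:ℂ) (herm z w)
      rw [norm_one] at h
      have habs : ‖herm z w‖ = ‖herm z w‖ := rfl
      have hu := herm_abs_le z w
      have ht : ‖1 - herm z w‖ = ‖(1:ℂ) - herm z w‖ := rfl
      linarith
    apply ContinuousAt.continuousWithinAt
    have h2 : ContinuousAt (fun w : Cn n => ‖1 - herm z w‖) w := by
      have : (fun w : Cn n => ‖1 - herm z w‖)
          = fun w : Cn n => ‖(1:ℂ) - herm z w‖ := rfl
      rw [this]
      exact ((continuous_const.sub (herm_continuous z)).norm).continuousAt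
    exact h2.rpow_const (Or.inl htpos.ne')

/-- if `a ≥ 0`, `α ≤ b` and `c ≤ a+b-α`, then `S_{a,b,c}` is bounded
from `L^1_α` to `L^∞`. -/
theorem stmt11 (n : ℕ) (hn : 1 ≤ n) (α a b c : ℝ) (hα : -1 < α)
    (ha : 0 ≤ a) (hab : α ≤ b) (hc : c ≤ a + b - α) :
    IsBddOp n (Sker n a b c) (vol n) 1 ⊤ (wvol n α) (vol n) := by
  set c₀ : ℝ := Real.Gamma ((n : ℝ) + α + 1) / ((n.factorial : ℝ) * Real.Gamma (α + 1)) with hc₀def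
  have hc₀ : 0 < c₀ := by
    apply div_pos
    · exact Real.Gamma_pos_of_pos (by have : (0:ℝ) ≤ (n:ℝ) := Nat.cast_nonneg n; linarith)
    · exact mul_pos (by exact_mod_cast n.factorial_pos) (Real.Gamma_pos_of_pos (by linarith))
  set M : ℝ := (2:ℝ) ^ (a + b - α) * 2 ^ (a + b - α - c) with hMdef
  have hM : 0 < M := mul_pos (Real.rpow_pos_of_pos two_pos _) (Real.rpow_pos_of_pos two_pos _)
  refine ⟨M / c₀, (div_pos hM hc₀).le, fun f hf => ?_⟩
  set g : Cn n → ℝ≥0∞ := fun w => ENNReal.ofReal (c₀ * (1 - ‖w‖ ^ 2) ^ α) with hgdef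
  have hwvol : wvol n α = (vol n).withDensity g := rfl
  -- measurability of the density
  have hgaem : AEMeasurable g (vol n) := by
    have h1 : AEStronglyMeasurable (fun w : Cn n => c₀ * (1 - ‖w‖ ^ 2) ^ α) (vol n) :=
      aesm_vol ((continuousOn_const.mul (contOn_rpow α)).aestronglyMeasurable
        (measurableSet_ball : MeasurableSet (unitBall n)))
    exact h1.aemeasurable.ennreal_ofReal
  have hgpos : ∀ᵐ w ∂(vol n), g w ≠ 0 := by
    filter_upwards [ball_ae] with w hw
    have h1 : 0 < 1 - ‖w‖ ^ 2 := by nlinarith [norm_nonneg w]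
    simp only [hgdef, ne_eq, ENNReal.ofReal_eq_zero, not_le]
    exact mul_pos hc₀ (Real.rpow_pos_of_pos h1 α)
  have hac : vol n ≪ wvol n α := by
    rw [hwvol]; exact withDensity_absolutelyContinuous' hgaem hgpos
  have hfm : AEStronglyMeasurable f (vol n) := hf.1.mono_ac hac
  -- the L¹ norm as a lintegral over vol n
  set I : ℝ≥0∞ := ∫⁻ w, (‖f w‖₊ : ℝ≥0∞) ∂(wvol n α) with hIdef
  have hIeq : I = ∫⁻ w, g w * ‖f w‖₊ ∂(vol n) := by
    rw [hIdef, hwvol, lintegral_withDensity_eq_lintegral_mul₀' hgaem (hwvol ▸ hf.1.enorm)]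
    rfl
  have hIlt : I < ⊤ := by
    have h2 := hf.2
    rwa [eLpNorm_one_eq_lintegral_enorm] at h2
  -- pointwise domination
  have hdom : ∀ z : Cn n, ‖z‖ < 1 → ∀ᵐ w ∂(vol n),
      (‖Sker n a b c z w * f w‖₊ : ℝ≥0∞) ≤ ENNReal.ofReal (M / c₀) * (g w * ‖f w‖₊) := by
    intro z hz
    filter_upwards [ball_ae] with w hw
    have hb := Sker_bound n α a b c ha hab hc z w hz hw
    calc (‖Sker n a b c z w * f w‖₊ : ℝ≥0∞)
        = (‖Sker n a b c z w‖₊ : ℝ≥0∞) * ‖f w‖₊ := by rw [nnnorm_mul, ENNReal.coe_mul]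
      _ ≤ ENNReal.ofReal (M * (1 - ‖w‖ ^ 2) ^ α) * ‖f w‖₊ := by
          apply mul_le_mul_left
          rw [← enorm_eq_nnnorm, ← ofReal_norm]
          exact ENNReal.ofReal_le_ofReal hb
      _ = ENNReal.ofReal (M / c₀) * (g w * ‖f w‖₊) := by
          rw [hgdef, ← mul_assoc, ← ENNReal.ofReal_mul (by positivity)]
          congr 2
          field_simp
  have hlint : ∀ z : Cn n, ‖z‖ < 1 →
      ∫⁻ w, (‖Sker n a b c z w * f w‖₊ : ℝ≥0∞) ∂(vol n) ≤ ENNReal.ofReal (M / c₀) * I := by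
    intro z hz
    calc ∫⁻ w, (‖Sker n a b c z w * f w‖₊ : ℝ≥0∞) ∂(vol n)
        ≤ ∫⁻ w, ENNReal.ofReal (M / c₀) * (g w * ‖f w‖₊) ∂(vol n) :=
          lintegral_mono_ae (hdom z hz)
      _ = ENNReal.ofReal (M / c₀) * ∫⁻ w, g w * ‖f w‖₊ ∂(vol n) :=
          lintegral_const_mul' _ _ ENNReal.ofReal_ne_top
      _ = ENNReal.ofReal (M / c₀) * I := by rw [← hIeq]
  have hint : ∀ z : Cn n, ‖z‖ < 1 → Integrable (fun w => Sker n a b c z w * f w) (vol n) := by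
    intro z hz
    refine ⟨(aesm_vol ((contOn_Sker a b c z hz).aestronglyMeasurable
      (measurableSet_ball : MeasurableSet (unitBall n)))).mul hfm, ?_⟩
    exact lt_of_le_of_lt (hlint z hz)
      (ENNReal.mul_lt_top ENNReal.ofReal_lt_top hIlt)
  constructor
  · filter_upwards [ball_ae] with z hz using hint z hz
  · rw [eLpNorm_exponent_top]
    have hae : ∀ᵐ z ∂(vol n),
        (‖∫ w, Sker n a b c z w * f w ∂(vol n)‖₊ : ℝ≥0∞) ≤ ENNReal.ofReal (M / c₀) * I := by
      filter_upwards [ball_ae] with z hz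
      exact le_trans (enorm_integral_le_lintegral_enorm _) (hlint z hz)
    calc eLpNormEssSup (fun z => ∫ w, Sker n a b c z w * f w ∂(vol n)) (vol n)
        ≤ ENNReal.ofReal (M / c₀) * I := essSup_le_of_ae_le _ hae
      _ = ENNReal.ofReal (M / c₀) * eLpNorm f 1 (wvol n α) := by
          rw [eLpNorm_one_eq_lintegral_enorm]
          rfl
end
end

section
/- Let n ≥ 1, let 1 ≤ q ≤ ∞, let α, β > -1 and let a, b, c be real numbers. If T_{a,b,c} is bounded from L^1_α to L^q_β (with L^∞ in place of L^q_β when q = ∞), then α ≤ b. -/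
open MeasureTheory Complex
open scoped ENNReal

noncomputable section

open MeasureTheory Set Metric
open scoped ENNReal

local notation "dim" => Module.finrank ℝ

variable {E : Type*} [NormedAddCommGroup E] [NormedSpace ℝ E] [MeasurableSpace E]
  [BorelSpace E] [FiniteDimensional ℝ E] [Nontrivial E]

private theorem lintegral_fun_norm_addHaar' (μ : Measure E) [μ.IsAddHaarMeasure]
    (g : ℝ → ℝ≥0∞) (hg : Measurable g) :
    ∫⁻ x, g ‖x‖ ∂μ
      = μ.toSphere Set.univ * ∫⁻ r in Set.Ioi (0:ℝ),
          ENNReal.ofReal (r ^ (dim E - 1)) * g r := by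
  have hmeas : Measurable fun p : sphere (0:E) 1 × Ioi (0:ℝ) => g p.2 :=
    (hg.comp measurable_subtype_coe).comp measurable_snd
  have hh : Measurable fun r : Ioi (0:ℝ) => g ↑r := hg.comp measurable_subtype_coe
  calc
    ∫⁻ x, g ‖x‖ ∂μ = ∫⁻ x : ({(0)}ᶜ : Set E), g ‖x.1‖ ∂(μ.comap (↑)) := by
      rw [lintegral_subtype_comap (measurableSet_singleton _).compl (fun x => g ‖x‖),
        restrict_compl_singleton]
    _ = ∫⁻ x : ({(0)}ᶜ : Set E), g ((homeomorphUnitSphereProd E) x).2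
          ∂(μ.comap (↑)) := lintegral_congr fun x => by simp
    _ = ∫⁻ p : sphere (0 : E) 1 × Ioi (0 : ℝ), g p.2
        ∂(μ.toSphere.prod (.volumeIoiPow (dim E - 1))) :=
      (μ.measurePreserving_homeomorphUnitSphereProd.lintegral_comp hmeas)
    _ = μ.toSphere Set.univ * ∫⁻ r : Ioi (0:ℝ), g r ∂(Measure.volumeIoiPow (dim E - 1)) := by
      rw [lintegral_prod _ hmeas.aemeasurable]
      simp [lintegral_const, mul_comm]
    _ = μ.toSphere Set.univ * ∫⁻ r in Set.Ioi (0:ℝ),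
          ENNReal.ofReal (r ^ (dim E - 1)) * g r := by
      congr 1
      rw [Measure.volumeIoiPow,
        lintegral_withDensity_eq_lintegral_mul _
          (by exact (measurable_subtype_coe.pow_const _).ennreal_ofReal) hh]
      simp only [Pi.mul_apply]
      exact lintegral_subtype_comap measurableSet_Ioi
        (fun r => ENNReal.ofReal (r ^ (dim E - 1)) * g r)

theorem finA (s : ℝ) (hs : -1 < s) :
    ∫⁻ r in Ioo (0:ℝ) 1, ENNReal.ofReal ((1-r)^s) ∂volume < ⊤ := by
  have I1 : IntervalIntegrable (fun x : ℝ => x ^ s) volume 0 1 := intervalIntegral.intervalIntegrable_rpow' hs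
  have I2 : IntervalIntegrable (fun x : ℝ => (1 - x) ^ s) volume 0 1 := by
    have := I1.comp_sub_left 1
    norm_num at this
    exact this.symm
  have I3 : IntegrableOn (fun x : ℝ => (1 - x) ^ s) (Ioo 0 1) volume :=
    ((intervalIntegrable_iff_integrableOn_Ioc_of_le zero_le_one).mp I2).mono_set Ioo_subset_Ioc_self
  calc ∫⁻ r in Ioo (0:ℝ) 1, ENNReal.ofReal ((1-r)^s) ∂volume
      ≤ ∫⁻ r in Ioo (0:ℝ) 1, ‖(1-r)^s‖₊ ∂volume :=
        lintegral_mono fun r => Real.ofReal_le_enorm _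
    _ < ⊤ := I3.2

theorem finB :
    ∫⁻ r in Ioo (1/2:ℝ) 1, ENNReal.ofReal ((1-r)⁻¹) ∂volume = ⊤ := by
  by_contra h
  have hmeas : Measurable fun r : ℝ => (1 - r)⁻¹ :=
    ((measurable_const.sub measurable_id).inv)
  have hInt : IntegrableOn (fun r : ℝ => (1 - r)⁻¹) (Ioo (1/2:ℝ) 1) volume := by
    refine ⟨hmeas.aestronglyMeasurable, ?_⟩
    show (∫⁻ r, ‖(1-r)⁻¹‖₊ ∂(volume.restrict (Ioo (1/2:ℝ) 1))) < ⊤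
    have heq : ∀ᵐ r ∂(volume.restrict (Ioo (1/2:ℝ) 1)),
        (‖(1-r)⁻¹‖₊ : ℝ≥0∞) = ENNReal.ofReal ((1-r)⁻¹) := by
      filter_upwards [ae_restrict_mem measurableSet_Ioo] with r hr
      exact (Real.enorm_eq_ofReal (inv_nonneg.mpr (show (0:ℝ) ≤ 1 - r by linarith [hr.2])))
    rw [lintegral_congr_ae heq]
    exact lt_top_iff_ne_top.mpr h
  have hIoc : IntegrableOn (fun r : ℝ => (1 - r)⁻¹) (Ioc (1/2:ℝ) 1) volume :=
    hInt.congr_set_ae Ioo_ae_eq_Ioc.symm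
  have hII : IntervalIntegrable (fun r : ℝ => (1 - r)⁻¹) volume (1/2) 1 :=
    (intervalIntegrable_iff_integrableOn_Ioc_of_le (by norm_num)).mpr hIoc
  have hII2 : IntervalIntegrable (fun r : ℝ => (r - 1)⁻¹) volume (1/2) 1 := by
    have heq : (fun r : ℝ => (r-1)⁻¹) = fun r => -((1-r)⁻¹) :=
      funext fun r => by rw [← inv_neg, neg_sub]
    rw [heq]; exact hII.neg
  rw [intervalIntegrable_sub_inv_iff] at hII2
  rcases hII2 with h1 | h1
  · norm_num at h1
  · exact h1 (by rw [Set.mem_uIcc]; left; constructor <;> norm_num)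

theorem ballA (μ : Measure E) [μ.IsAddHaarMeasure] (s : ℝ) (hs : -1 < s) :
    ∫⁻ w in ball (0:E) 1, ENNReal.ofReal ((1 - ‖w‖^2) ^ s) ∂μ < ⊤ := by
  set g : ℝ → ℝ≥0∞ := fun r => (Iio (1:ℝ)).indicator
    (fun r => ENNReal.ofReal ((1 - r^2) ^ s)) r with hg
  have hgm : Measurable g := by
    apply Measurable.indicator _ measurableSet_Iio
    fun_prop
  have key : ∫⁻ w in ball (0:E) 1, ENNReal.ofReal ((1 - ‖w‖^2) ^ s) ∂μ
      = ∫⁻ x, g ‖x‖ ∂μ := by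
    rw [← lintegral_indicator measurableSet_ball _]
    refine lintegral_congr fun x => ?_
    by_cases hx : ‖x‖ < 1
    · simp [hg, Set.indicator, mem_ball_zero_iff, hx]
    · simp [hg, Set.indicator, mem_ball_zero_iff, hx]
  rw [key, lintegral_fun_norm_addHaar' μ g hgm]
  set C : ℝ := max 1 (2 ^ s) with hC
  have hC0 : 0 ≤ C := le_trans zero_le_one (le_max_left _ _)
  have hbound : ∫⁻ r in Ioi (0:ℝ), ENNReal.ofReal (r ^ (dim E - 1)) * g r
      ≤ ENNReal.ofReal C * ∫⁻ r in Ioo (0:ℝ) 1, ENNReal.ofReal ((1-r) ^ s) ∂volume := by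
    rw [← lintegral_const_mul _ (by fun_prop)]
    rw [← lintegral_indicator measurableSet_Ioo _, ← lintegral_indicator measurableSet_Ioi _]
    refine lintegral_mono fun r => ?_
    rcases le_or_gt r 0 with h0 | h0
    · rw [Set.indicator_of_notMem (by simpa using h0.not_gt)]
      exact zero_le
    rcases le_or_gt 1 r with h1 | h1
    · simp [hg, Set.indicator, h1.not_gt, Set.mem_Ioo]
    have hr01 : r ∈ Ioo (0:ℝ) 1 := ⟨h0, h1⟩
    rw [Set.indicator_of_mem (Set.mem_Ioi.mpr h0), Set.indicator_of_mem hr01,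
      hg]
    simp only [Set.indicator_of_mem (Set.mem_Iio.mpr h1)]
    rw [← ENNReal.ofReal_mul (pow_nonneg h0.le _), ← ENNReal.ofReal_mul hC0]
    apply ENNReal.ofReal_le_ofReal
    have hfac : (1 - r^2) = (1 - r) * (1 + r) := by ring
    have h1r : (0:ℝ) ≤ 1 - r := by linarith
    have h1r' : (1:ℝ) ≤ 1 + r := by linarith
    have hsplit : (1 - r^2) ^ s = (1 - r) ^ s * (1 + r) ^ s := by
      rw [hfac, Real.mul_rpow h1r (by linarith)]
    have hple : (1 + r) ^ s ≤ C := by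
      rcases le_or_gt 0 s with hs0 | hs0
      · exact le_trans (Real.rpow_le_rpow (by linarith) (by linarith) hs0) (le_max_right _ _)
      · exact le_trans (Real.rpow_le_one_of_one_le_of_nonpos h1r' hs0.le) (le_max_left _ _)
    calc r ^ (dim E - 1) * (1 - r^2) ^ s ≤ 1 * (1 - r^2) ^ s := by
          apply mul_le_mul_of_nonneg_right _ (Real.rpow_nonneg (by nlinarith) s)
          exact pow_le_one₀ h0.le h1.le
      _ = (1 - r) ^ s * (1 + r) ^ s := by rw [one_mul, hsplit]
      _ ≤ C * (1 - r) ^ s := by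
          rw [mul_comm]
          exact mul_le_mul_of_nonneg_right hple (by positivity)
  refine ENNReal.mul_lt_top (measure_lt_top _ _) (lt_of_le_of_lt hbound ?_)
  exact ENNReal.mul_lt_top ENNReal.ofReal_lt_top (finA s hs)

theorem ballB (μ : Measure E) [μ.IsAddHaarMeasure] :
    ∫⁻ w in ball (0:E) 1, ENNReal.ofReal ((1 - ‖w‖^2)⁻¹) ∂μ = ⊤ := by
  set g : ℝ → ℝ≥0∞ := fun r => (Iio (1:ℝ)).indicator
    (fun r => ENNReal.ofReal ((1 - r^2)⁻¹)) r with hg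
  have hgm : Measurable g := by
    apply Measurable.indicator _ measurableSet_Iio
    fun_prop
  have key : ∫⁻ w in ball (0:E) 1, ENNReal.ofReal ((1 - ‖w‖^2)⁻¹) ∂μ
      = ∫⁻ x, g ‖x‖ ∂μ := by
    rw [← lintegral_indicator measurableSet_ball _]
    refine lintegral_congr fun x => ?_
    by_cases hx : ‖x‖ < 1
    · simp [hg, Set.indicator, mem_ball_zero_iff, hx]
    · simp [hg, Set.indicator, mem_ball_zero_iff, hx]
  rw [key, lintegral_fun_norm_addHaar' μ g hgm]
  set m : ℝ := (1/2 : ℝ) ^ (dim E - 1) / 2 with hm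
  have hm0 : 0 < m := by positivity
  have hlow : ENNReal.ofReal m * ∫⁻ r in Ioo (1/2:ℝ) 1, ENNReal.ofReal ((1-r)⁻¹) ∂volume
      ≤ ∫⁻ r in Ioi (0:ℝ), ENNReal.ofReal (r ^ (dim E - 1)) * g r := by
    rw [← lintegral_const_mul _ (by fun_prop)]
    have hsub : Ioo (1/2:ℝ) 1 ⊆ Ioi (0:ℝ) := fun r hr => lt_trans (by norm_num) hr.1
    refine le_trans ?_ (lintegral_mono_set hsub)
    refine lintegral_mono_ae ?_
    filter_upwards [ae_restrict_mem measurableSet_Ioo] with r hr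
    have h12 : (1/2:ℝ) < r := hr.1
    have h1 : r < 1 := hr.2
    have hgr : g r = ENNReal.ofReal ((1 - r^2)⁻¹) := by
      rw [hg]; simp only [Set.indicator_of_mem (Set.mem_Iio.mpr h1)]
    rw [hgr, ← ENNReal.ofReal_mul hm0.le, ← ENNReal.ofReal_mul (pow_nonneg (by linarith) _)]
    apply ENNReal.ofReal_le_ofReal
    have h1r : (0:ℝ) < 1 - r^2 := by nlinarith
    have hle : 1 - r^2 ≤ 2 * (1 - r) := by nlinarith
    have hinv : (2 * (1 - r))⁻¹ ≤ (1 - r^2)⁻¹ := by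
      apply inv_anti₀ h1r hle
    have hpow : m * 2 ≤ r ^ (dim E - 1) * 1 := by
      rw [hm, div_mul_cancel₀ _ (by norm_num), mul_one]
      exact pow_le_pow_left₀ (by norm_num) h12.le _
    calc m * (1 - r)⁻¹ = (m * 2) * (2 * (1 - r))⁻¹ := by
          rw [mul_inv]; ring
      _ ≤ r ^ (dim E - 1) * (1 - r^2)⁻¹ := by
          apply mul_le_mul (by simpa using hpow) hinv (inv_nonneg.mpr (by linarith))
          exact pow_nonneg (by linarith) _
  have hIoo : ENNReal.ofReal m * ∫⁻ r in Ioo (1/2:ℝ) 1, ENNReal.ofReal ((1-r)⁻¹) ∂volume = ⊤ := by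
    rw [finB, ENNReal.mul_top (by simp [hm0, ENNReal.ofReal_eq_zero, hm0.not_ge])]
  have htop : ∫⁻ r in Ioi (0:ℝ), ENNReal.ofReal (r ^ (dim E - 1)) * g r = ⊤ :=
    top_le_iff.mp (hIoo ▸ hlow)
  have hne : μ.toSphere Set.univ ≠ 0 := by
    rw [Measure.toSphere_apply_univ]
    refine mul_ne_zero (by simp [Module.finrank_pos.ne']) ?_
    exact (measure_ball_pos μ 0 one_pos).ne'
  rw [htop]
  exact ENNReal.mul_top hne

section Main

open Set Metric

theorem main_aux (n : ℕ) (hn : 1 ≤ n) (α a b c : ℝ)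
    (hα : -1 < α)
    (hT : ∃ C : ℝ, 0 ≤ C ∧ ∀ f : Cn n → ℂ, MemLp f 1 (wvol n α) →
      (∀ᵐ z ∂(vol n), Integrable (fun w => Tker n a b c z w * f w) (vol n))) :
    α ≤ b := by
  haveI : Nonempty (Fin n) := ⟨⟨0, hn⟩⟩
  haveI : Nontrivial (Cn n) := inferInstance
  by_contra hba
  push_neg at hba
  set t : ℝ := -1 - b with ht
  set f : Cn n → ℂ := fun w => (((1 - ‖w‖^2) ^ t : ℝ) : ℂ) with hf
  have hfm : Measurable f := by fun_prop
  set V : ℝ≥0∞ := volume (unitBall n) with hV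
  have hV0 : V ≠ 0 := (measure_ball_pos volume 0 one_pos).ne'
  have hVtop : V ≠ ⊤ := measure_ball_lt_top.ne
  have hball : MeasurableSet (unitBall n) := measurableSet_ball
  have hvol_lint : ∀ F : Cn n → ℝ≥0∞, ∫⁻ w, F w ∂(vol n)
      = V⁻¹ * ∫⁻ w in unitBall n, F w ∂volume := by
    intro F
    rw [vol, lintegral_smul_measure, smul_eq_mul, hV]
  set cα : ℝ := Real.Gamma ((n : ℝ) + α + 1) / ((n.factorial : ℝ) * Real.Gamma (α + 1))
    with hcα
  have hcα0 : 0 < cα := by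
    apply div_pos (Real.Gamma_pos_of_pos (by have : (0:ℝ) ≤ n := Nat.cast_nonneg n; linarith))
    exact mul_pos (by exact_mod_cast n.factorial_pos) (Real.Gamma_pos_of_pos (by linarith))
  -- f is in L^1 of the weighted measure
  have hmem : MemLp f 1 (wvol n α) := by
    refine ⟨hfm.aestronglyMeasurable, ?_⟩
    rw [eLpNorm_one_eq_lintegral_enorm, wvol,
      lintegral_withDensity_eq_lintegral_mul _ (by fun_prop) hfm.enorm, hvol_lint]
    have hptwise : ∀ w ∈ unitBall n,
        (fun w => (ENNReal.ofReal (cα * (1 - ‖w‖^2) ^ α) * ‖f w‖ₑ : ℝ≥0∞)) w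
          = ENNReal.ofReal cα * ENNReal.ofReal ((1 - ‖w‖^2) ^ (α + t)) := by
      intro w hw
      have hw1 : ‖w‖ < 1 := mem_ball_zero_iff.mp hw
      have hx : (0:ℝ) < 1 - ‖w‖^2 := by
        have := norm_nonneg w; nlinarith
      simp only [hf]
      rw [← ofReal_norm, Complex.norm_real, Real.norm_eq_abs,
        _root_.abs_of_nonneg (Real.rpow_nonneg hx.le t),
        ← ENNReal.ofReal_mul (mul_nonneg hcα0.le (Real.rpow_nonneg hx.le α)),
        mul_assoc, ← Real.rpow_add hx, ENNReal.ofReal_mul hcα0.le]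
    simp only [Pi.mul_apply, ← hcα]
    rw [setLIntegral_congr_fun hball hptwise]
    rw [lintegral_const_mul _ (by fun_prop)]
    have hfin : ∫⁻ w in unitBall n, ENNReal.ofReal ((1 - ‖w‖^2) ^ (α + t)) ∂volume < ⊤ :=
      ballA (E := Cn n) volume (α + t) (by rw [ht]; linarith)
    exact ENNReal.mul_lt_top (ENNReal.inv_lt_top.mpr (pos_iff_ne_zero.mpr hV0))
        (ENNReal.mul_lt_top ENNReal.ofReal_lt_top hfin)
  obtain ⟨C, hC0, hC⟩ := hT
  have hae := hC f hmem
  -- but the integral diverges for every z in the ball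
  have hnot : ∀ z ∈ unitBall n, ¬ Integrable (fun w => Tker n a b c z w * f w) (vol n) := by
    intro z hz hI
    have hz1 : ‖z‖ < 1 := mem_ball_zero_iff.mp hz
    have hzx : (0:ℝ) < 1 - ‖z‖^2 := by have := norm_nonneg z; nlinarith
    set δ : ℝ := 1 - ‖z‖ with hδdef
    have hδ : 0 < δ := by linarith
    set m : ℝ := min (δ ^ (-c)) (2 ^ (-c)) with hmdef
    have hm0 : 0 < m := lt_min (Real.rpow_pos_of_pos hδ _) (Real.rpow_pos_of_pos two_pos _)
    set K : ℝ := (1 - ‖z‖^2) ^ a * m with hKdef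
    have hK0 : 0 < K := mul_pos (Real.rpow_pos_of_pos hzx _) hm0
    -- pointwise lower bound on the ball
    have hlow : ∀ w ∈ unitBall n,
        ENNReal.ofReal (K * (1 - ‖w‖^2)⁻¹) ≤ (‖Tker n a b c z w * f w‖₊ : ℝ≥0∞) := by
      intro w hw
      have hw1 : ‖w‖ < 1 := mem_ball_zero_iff.mp hw
      have hwx : (0:ℝ) < 1 - ‖w‖^2 := by have := norm_nonneg w; nlinarith
      have hherm : herm z w = inner ℂ w z := by
        simp [herm, PiLp.inner_apply, mul_comm]
      have habs_le : ‖herm z w‖ ≤ ‖z‖ * ‖w‖ := by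
        rw [hherm]
        exact le_trans (norm_inner_le_norm w z) (by rw [mul_comm])
      have habs_lt : ‖herm z w‖ < 1 :=
        lt_of_le_of_lt habs_le (by nlinarith [norm_nonneg z, norm_nonneg w])
      have hub : ‖1 - herm z w‖ ≤ 2 := by
        have h2 := norm_sub_le (1:ℂ) (herm z w)
        simp only [norm_one] at h2
        linarith [habs_lt.le]
      have hlb : δ ≤ ‖1 - herm z w‖ := by
        have h1 : ‖herm z w‖ ≤ ‖z‖ :=
          le_trans habs_le (by nlinarith [norm_nonneg z, norm_nonneg w, hw1.le])
        have h2 := norm_sub_norm_le (1:ℂ) (herm z w)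
        simp only [norm_one] at h2
        linarith
      -- the modulus of the cpow factor
      have hcpow : ‖(1 - herm z w) ^ (-(c:ℂ))‖
          = ‖1 - herm z w‖ ^ (-c) := by
        rw [show (-(c:ℂ)) = ((-c : ℝ) : ℂ) by push_cast; ring, Complex.norm_cpow_real]
      have hmin : m ≤ ‖1 - herm z w‖ ^ (-c) := by
        rcases le_or_gt 0 (-c) with hc | hc
        · exact le_trans (min_le_left _ _) (Real.rpow_le_rpow hδ.le hlb hc)
        · exact le_trans (min_le_right _ _)
            (Real.rpow_le_rpow_of_nonpos (lt_of_lt_of_le hδ hlb) hub hc.le)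
      -- compute the norm
      have hnorm : ‖Tker n a b c z w * f w‖
          = ((1 - ‖z‖^2) ^ a * (1 - ‖w‖^2) ^ b)
            * ‖1 - herm z w‖ ^ (-c) * (1 - ‖w‖^2) ^ t := by
        rw [Tker, hf]
        rw [norm_mul, norm_mul, Complex.norm_real, Complex.norm_real, Real.norm_eq_abs,
          Real.norm_eq_abs, hcpow]
        rw [_root_.abs_of_nonneg (mul_nonneg (Real.rpow_nonneg hzx.le a)
          (Real.rpow_nonneg hwx.le b)), _root_.abs_of_nonneg (Real.rpow_nonneg hwx.le t)]
      change _ ≤ ‖Tker n a b c z w * f w‖ₑ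
      rw [← ofReal_norm]
      apply ENNReal.ofReal_le_ofReal
      rw [hnorm, hKdef]
      have hbt : (1 - ‖w‖^2) ^ b * (1 - ‖w‖^2) ^ t = (1 - ‖w‖^2)⁻¹ := by
        rw [← Real.rpow_add hwx, show b + t = -1 by rw [ht]; ring, Real.rpow_neg_one]
      calc ((1 - ‖z‖^2) ^ a * m) * (1 - ‖w‖^2)⁻¹
          = ((1 - ‖z‖^2) ^ a * m) * ((1 - ‖w‖^2) ^ b * (1 - ‖w‖^2) ^ t) := by rw [hbt]
        _ ≤ ((1 - ‖z‖^2) ^ a * (‖1 - herm z w‖ ^ (-c)))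
            * ((1 - ‖w‖^2) ^ b * (1 - ‖w‖^2) ^ t) := by
            apply mul_le_mul_of_nonneg_right _ (mul_nonneg (Real.rpow_nonneg hwx.le b)
              (Real.rpow_nonneg hwx.le t))
            exact mul_le_mul_of_nonneg_left hmin (Real.rpow_nonneg hzx.le a)
        _ = ((1 - ‖z‖^2) ^ a * (1 - ‖w‖^2) ^ b)
            * ‖1 - herm z w‖ ^ (-c) * (1 - ‖w‖^2) ^ t := by ring
    -- derive a contradiction with finiteness of the integral
    have hfin : (∫⁻ w, (‖Tker n a b c z w * f w‖₊ : ℝ≥0∞) ∂(vol n)) < ⊤ := hI.2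
    rw [hvol_lint] at hfin
    have hdiv : (∫⁻ w in unitBall n, (‖Tker n a b c z w * f w‖₊ : ℝ≥0∞) ∂volume) = ⊤ := by
      rw [eq_top_iff]
      have hballB : ∫⁻ w in unitBall n, ENNReal.ofReal ((1 - ‖w‖^2)⁻¹) ∂volume = ⊤ :=
        ballB (E := Cn n) volume
      calc (⊤ : ℝ≥0∞) = ENNReal.ofReal K * ∫⁻ w in unitBall n,
            ENNReal.ofReal ((1 - ‖w‖^2)⁻¹) ∂volume := by
            rw [hballB, ENNReal.mul_top
              (by simp [ENNReal.ofReal_eq_zero, hK0.not_ge])]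
        _ = ∫⁻ w in unitBall n, ENNReal.ofReal K
              * ENNReal.ofReal ((1 - ‖w‖^2)⁻¹) ∂volume := by
            rw [lintegral_const_mul _ (by fun_prop)]
        _ ≤ ∫⁻ w in unitBall n, (‖Tker n a b c z w * f w‖₊ : ℝ≥0∞) ∂volume := by
            apply lintegral_mono_ae
            filter_upwards [ae_restrict_mem hball] with w hw
            rw [← ENNReal.ofReal_mul hK0.le]
            exact hlow w hw
    rw [hdiv, ENNReal.mul_top (ENNReal.inv_ne_zero.mpr hVtop)] at hfin
    exact (lt_irrefl _ hfin)
  -- contradiction with a.e. integrability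
  have hsub : unitBall n ⊆ {z | ¬ Integrable (fun w => Tker n a b c z w * f w) (vol n)} :=
    fun z hz => hnot z hz
  rw [ae_iff] at hae
  have h0 : vol n (unitBall n) = 0 := measure_mono_null hsub hae
  rw [vol, Measure.smul_apply, Measure.restrict_apply hball,
    Set.inter_self, smul_eq_mul, ENNReal.inv_mul_cancel hV0 hVtop] at h0
  exact one_ne_zero h0

end Main

/-- if `T_{a,b,c}` is bounded from `L^1_α` to `L^q_β` (`1 ≤ q ≤ ∞`),
then `α ≤ b`. -/
theorem stmt17 (n : ℕ) (hn : 1 ≤ n) (q : ℝ≥0∞) (α β a b c : ℝ)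
    (hq : 1 ≤ q) (hα : -1 < α) (hβ : -1 < β)
    (hT : IsBddOp n (Tker n a b c) (vol n) 1 q
      (wvol n α) (if q = ⊤ then vol n else wvol n β)) :
    α ≤ b := by
  apply main_aux n hn α a b c hα
  obtain ⟨C, hC0, hC⟩ := hT
  exact ⟨C, hC0, fun f hf => (hC f hf).1⟩
end
end
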